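/- Let d ≥ 2. Define configurations p, q : {1,...,2^{d-1}+3} → ℝ^d as follows. Enumerate the vertices w₁,...,w_{2^{d-2}} of the cube {±1}^{d-2} ⊂ ℝ^{d-2}. Set p₁ = (0,2,0,...,0), p₂ = (-1/4,1/2,0,...,0), p₃ = (21/20,9/10,0,...,0), p_{2j} = (-1,0,w_{j-1}), p_{2j+1} = (1,0,w_{j-1}) for 2 ≤ j ≤ 2^{d-2}+1; and q₁ = p₁, q₂ = (-21/20,9/10,0,...,0), q₃ = (1/4,1/2,0,...,0), q_k = p_k for k ≥ 4. Let G_d be the graph on {1,...,2^{d-1}+3} whose edges are: all pairs within {1,4,5,...,2^{d-1}+3}; {1,2} and {2,2k} for 2 ≤ k ≤ 2^{d-2}+1; {1,3} and {3,2k+1} for 2 ≤ k ≤ 2^{d-2}+1; and {2,3}. Then for every edge {i,j} of G_d, |pᵢ - pⱼ| = |qᵢ - qⱼ|, but |p₂ - p₅| ≠ |q₂ - q₅|. Hence the framework G_d(p) is not globally rigid in ℝ^d. -/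

import Mathlib

/-- The point of ℝ^d with first coordinate `a`, second coordinate `b`, and remaining
`d-2` coordinates given by `w`. -/
noncomputable def vec (d : ℕ) (a b : ℝ) (w : Fin (d-2) → ℝ) : EuclideanSpace ℝ (Fin d) :=
  WithLp.toLp 2 (fun i : Fin d => if i.1 = 0 then a else if i.1 = 1 then b else
    if h : i.1 - 2 < d - 2 then w ⟨i.1 - 2, h⟩ else 0)

/-- Membership in the "hub" vertex set {1, 4, 5, ..., 2^(d-1)+3} (1-based labels). -/
def IsHub (d m : ℕ) : Prop := m = 1 ∨ (4 ≤ m ∧ m ≤ 2^(d-1)+3)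

/-- The edge set of the graph G_d on {1, ..., 2^(d-1)+3}: all pairs of hub vertices;
{1,2} and {2,2k} for 2 ≤ k ≤ 2^(d-2)+1; {1,3} and {3,2k+1} for 2 ≤ k ≤ 2^(d-2)+1;
and {2,3}. -/
def Ed (d : ℕ) : Set (ℕ × ℕ) :=
  {e | (IsHub d e.1 ∧ IsHub d e.2 ∧ e.1 ≠ e.2) ∨ e = (1,2) ∨
    (∃ k, 2 ≤ k ∧ k ≤ 2^(d-2)+1 ∧ e = (2, 2*k)) ∨ e = (1,3) ∨
    (∃ k, 2 ≤ k ∧ k ≤ 2^(d-2)+1 ∧ e = (3, 2*k+1)) ∨ e = (2,3)}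

/-!
The points `p₂` and `q₂` are the two intersections of the circle of radius `√37/4` about `(0, 2)`
with the circle of radius `√13/4` about `(-1, 0)` in the plane of the first two coordinates; every
point `(-1, 0, w)` lies over that centre, so it is at the same distance from `p₂` and from `q₂`.
Likewise `p₃` and `q₃` are the two intersections of circles about `(0, 2)` and `(1, 0)`, and the
pair `(q₂, q₃)` is the mirror image of `(p₃, p₂)`, so `|p₂ - p₃| = |q₂ - q₃|`. All remaining
edges join points where `p` and `q` agree. The point `p₅ = (1, 0, w₁)` lies over `(1, 0)` instead,
and its planar distances to `p₂` and `q₂` differ.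
-/

theorem dist_vec {d : ℕ} (hd : 2 ≤ d) (a b a' b' : ℝ) (w w' : Fin (d - 2) → ℝ) :
    dist (vec d a b w) (vec d a' b' w') =
      √((a - a') ^ 2 + (b - b') ^ 2 + ∑ i, (w i - w' i) ^ 2) := by
  obtain ⟨n, rfl⟩ := Nat.exists_eq_add_of_le' hd
  rw [EuclideanSpace.dist_eq, Fin.sum_univ_succ, Fin.sum_univ_succ]
  simp only [vec, Fin.val_eq_zero_iff, add_tsub_cancel_right, ↓reduceIte, Real.dist_eq, sq_abs,
    Fin.succ_zero_eq_one, one_ne_zero, Fin.coe_ofNat_eq_mod, Nat.one_mod, Fin.succ_ne_zero,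
    Fin.val_succ, add_assoc, Nat.reduceAdd, Nat.reduceEqDiff, Fin.is_lt, ↓reduceDIte, Fin.eta]
  rfl

theorem dist_vec_eq_dist_vec_iff {d : ℕ} (hd : 2 ≤ d) {a b a' b' c e c' e' : ℝ}
    (w w' : Fin (d - 2) → ℝ) :
    dist (vec d a b w) (vec d a' b' w') = dist (vec d c e w) (vec d c' e' w') ↔
      (a - a') ^ 2 + (b - b') ^ 2 = (c - c') ^ 2 + (e - e') ^ 2 := by
  rw [dist_vec hd, dist_vec hd, Real.sqrt_inj (by positivity) (by positivity), add_left_inj]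

theorem stmt_15_general (d : ℕ) (hd : 2 ≤ d)
    (w : ℕ → Fin (d-2) → ℝ)
    (p q : ℕ → EuclideanSpace ℝ (Fin d))
    (hp1 : p 1 = vec d 0 2 (fun _ => 0))
    (hp2 : p 2 = vec d (-1/4) (1/2) (fun _ => 0))
    (hp3 : p 3 = vec d (21/20) (9/10) (fun _ => 0))
    (hpev : ∀ j, 2 ≤ j → j ≤ 2^(d-2)+1 → p (2*j) = vec d (-1) 0 (w (j-1)))
    (hpod : ∀ j, 2 ≤ j → j ≤ 2^(d-2)+1 → p (2*j+1) = vec d 1 0 (w (j-1)))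
    (hq1 : q 1 = p 1)
    (hq2 : q 2 = vec d (-21/20) (9/10) (fun _ => 0))
    (hq3 : q 3 = vec d (1/4) (1/2) (fun _ => 0))
    (hqk : ∀ k, 4 ≤ k → k ≤ 2^(d-1)+3 → q k = p k) :
    (∀ e ∈ Ed d, dist (p e.1) (p e.2) = dist (q e.1) (q e.2)) ∧
    dist (p 2) (p 5) ≠ dist (q 2) (q 5) ∧
    ¬ (∀ q' : ℕ → EuclideanSpace ℝ (Fin d),
        (∀ e ∈ Ed d, dist (p e.1) (p e.2) = dist (q' e.1) (q' e.2)) →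
        ∀ i j, 1 ≤ i → i ≤ 2^(d-1)+3 → 1 ≤ j → j ≤ 2^(d-1)+3 →
          dist (p i) (p j) = dist (q' i) (q' j)) := by
  have hpow : 2 ^ (d - 1) = 2 * 2 ^ (d - 2) := by
    rw [← pow_succ']; congr 1; omega
  have hone_le : 1 ≤ 2 ^ (d - 2) := Nat.one_le_two_pow
  have hq_hub : ∀ m, IsHub d m → q m = p m := by
    rintro m (rfl | ⟨h4, hle⟩)
    exacts [hq1, hqk m h4 hle]
  have hp5 : p 5 = vec d 1 0 (w 1) := hpod 2 le_rfl (by omega)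
  have hq5 : q 5 = p 5 := hqk 5 (by norm_num) (by omega)
  have hedges : ∀ e ∈ Ed d, dist (p e.1) (p e.2) = dist (q e.1) (q e.2) := by
    rintro ⟨i, j⟩ (⟨hi, hj, -⟩ | he | ⟨k, hk1, hk2, he⟩ | he | ⟨k, hk1, hk2, he⟩ | he)
    · rw [hq_hub i hi, hq_hub j hj]
    all_goals cases he
    · rw [hq1, hp1, hp2, hq2, dist_vec_eq_dist_vec_iff hd]; norm_num
    · rw [hqk (2 * k) (by omega) (by omega), hp2, hq2, hpev k hk1 hk2,
        dist_vec_eq_dist_vec_iff hd]; norm_num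
    · rw [hq1, hp1, hp3, hq3, dist_vec_eq_dist_vec_iff hd]; norm_num
    · rw [hqk (2 * k + 1) (by omega) (by omega), hp3, hq3, hpod k hk1 hk2,
        dist_vec_eq_dist_vec_iff hd]; norm_num
    · rw [hp2, hp3, hq2, hq3, dist_vec_eq_dist_vec_iff hd]; norm_num
  have hnot : dist (p 2) (p 5) ≠ dist (q 2) (q 5) := by
    rw [hq5, hp2, hq2, hp5, Ne, dist_vec_eq_dist_vec_iff hd]; norm_num
  exact ⟨hedges, hnot, fun H =>
    hnot (H q hedges 2 5 (by norm_num) (by omega) (by norm_num) (by omega))⟩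

/-- The frameworks G_d(p) and G_d(q) of the d-dimensional construction are equivalent
but not congruent; hence G_d(p) is not globally rigid in ℝ^d.
Here `w k` (for 1 ≤ k ≤ 2^(d-2)) enumerates the vertices of the cube {±1}^(d-2). -/
theorem stmt_15 (d : ℕ) (hd : 2 ≤ d)
    (w : ℕ → Fin (d-2) → ℝ)
    (hw : ∀ k, 1 ≤ k → k ≤ 2^(d-2) → ∀ i, w k i = 1 ∨ w k i = -1)
    (hwinj : ∀ k l, 1 ≤ k → k ≤ 2^(d-2) → 1 ≤ l → l ≤ 2^(d-2) → w k = w l → k = l)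
    (p q : ℕ → EuclideanSpace ℝ (Fin d))
    (hp1 : p 1 = vec d 0 2 (fun _ => 0))
    (hp2 : p 2 = vec d (-1/4) (1/2) (fun _ => 0))
    (hp3 : p 3 = vec d (21/20) (9/10) (fun _ => 0))
    (hpev : ∀ j, 2 ≤ j → j ≤ 2^(d-2)+1 → p (2*j) = vec d (-1) 0 (w (j-1)))
    (hpod : ∀ j, 2 ≤ j → j ≤ 2^(d-2)+1 → p (2*j+1) = vec d 1 0 (w (j-1)))
    (hq1 : q 1 = p 1)
    (hq2 : q 2 = vec d (-21/20) (9/10) (fun _ => 0))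
    (hq3 : q 3 = vec d (1/4) (1/2) (fun _ => 0))
    (hqk : ∀ k, 4 ≤ k → k ≤ 2^(d-1)+3 → q k = p k) :
    (∀ e ∈ Ed d, dist (p e.1) (p e.2) = dist (q e.1) (q e.2)) ∧
    dist (p 2) (p 5) ≠ dist (q 2) (q 5) ∧
    ¬ (∀ q' : ℕ → EuclideanSpace ℝ (Fin d),
        (∀ e ∈ Ed d, dist (p e.1) (p e.2) = dist (q' e.1) (q' e.2)) →
        ∀ i j, 1 ≤ i → i ≤ 2^(d-1)+3 → 1 ≤ j → j ≤ 2^(d-1)+3 →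
          dist (p i) (p j) = dist (q' i) (q' j)) :=
  stmt_15_general d hd w p q hp1 hp2 hp3 hpev hpod hq1 hq2 hq3 hqk
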